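/- arXiv:0905.4165 — 2 statements merged into one kernel-verified Lean document; each statement's English description precedes it below -/
import Mathlib

section
/- For every odd rational prime p, there exists a quaternion π ∈ H(ℤ) with N(π) = p = π·π̄; in particular, p is not prime (irreducible) in H(ℤ). -/
open Quaternion

/-! Lagrange's four-square theorem gives `π` with `N(π) = p`, so `p = π π̄`. Since the norm is
multiplicative, units of `ℍ[ℤ]` have norm `1`, whereas both factors have norm `p > 1`. -/

namespace Quaternion

theorem exists_normSq_eq_natCast (n : ℕ) : ∃ π : ℍ[ℤ], normSq π = n := by
  obtain ⟨a, b, c, d, h⟩ := Nat.sum_four_squares n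
  let π : ℍ[ℤ] := ⟨a, b, c, d⟩
  refine ⟨π, ?_⟩
  rw [normSq_def', ← h]
  push_cast [π]
  ring

theorem normSq_eq_one_of_isUnit {u : ℍ[ℤ]} (hu : IsUnit u) : normSq u = 1 :=
  (Int.isUnit_iff.mp (hu.map normSq)).resolve_right fun h => by
    linarith [normSq_nonneg (a := u)]

theorem not_irreducible_coe_normSq {π : ℍ[ℤ]} (hπ : normSq π ≠ 1) :
    ¬ Irreducible ((normSq π : ℤ) : ℍ[ℤ]) := fun hirr =>
  (hirr.isUnit_or_isUnit (self_mul_star π).symm).elim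
    (fun h => hπ (normSq_eq_one_of_isUnit h))
    (fun h => hπ (normSq_star (a := π) ▸ normSq_eq_one_of_isUnit h))

end Quaternion

theorem odd_prime_is_quaternion_norm_general (p : ℕ) (hp : p.Prime) :
    (∃ π : ℍ[ℤ], Quaternion.normSq π = (p : ℤ) ∧ ((p : ℤ) : ℍ[ℤ]) = π * star π) ∧
    ¬ Irreducible (((p : ℤ) : ℍ[ℤ])) := by
  obtain ⟨π, hπ⟩ := exists_normSq_eq_natCast p
  have hπ_ne_one : normSq π ≠ 1 := by
    rw [hπ]
    exact_mod_cast hp.one_lt.ne'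
  refine ⟨⟨π, hπ, ?_⟩, hπ ▸ not_irreducible_coe_normSq hπ_ne_one⟩
  rw [self_mul_star, hπ]
  norm_cast

theorem odd_prime_is_quaternion_norm (p : ℕ) (hp : p.Prime) (hodd : Odd p) :
    (∃ π : ℍ[ℤ], Quaternion.normSq π = (p : ℤ) ∧ ((p : ℤ) : ℍ[ℤ]) = π * star π) ∧
    ¬ Irreducible (((p : ℤ) : ℍ[ℤ])) :=
  odd_prime_is_quaternion_norm_general p hp
end

section
/- If a and b are relatively prime integers, then the quotient ring H(K₁)/⟨a + b(i+j+k)⟩ is isomorphic to ℤ/(a² + 3b²)ℤ. -/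
open Quaternion

def HK1 : Subring ℍ[ℤ] where
  carrier := {q | ∃ a b : ℤ, q = ⟨a, b, b, b⟩}
  mul_mem' := by
    rintro _ _ ⟨a, b, rfl⟩ ⟨c, d, rfl⟩
    refine ⟨a*c - 3*b*d, a*d + b*c, ?_⟩
    ext <;> simp <;> erw [QuaternionAlgebra.mk_mul_mk] <;> simp <;> ring
  one_mem' := ⟨1, 0, by ext <;> simp⟩
  add_mem' := by
    rintro _ _ ⟨a, b, rfl⟩ ⟨c, d, rfl⟩
    exact ⟨a + c, b + d, by ext <;> simp <;> rfl⟩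
  zero_mem' := ⟨0, 0, by ext <;> simp⟩
  neg_mem' := by
    rintro _ ⟨a, b, rfl⟩
    exact ⟨-a, -b, by ext <;> simp <;> rfl⟩

noncomputable instance : CommRing HK1 :=
  { (inferInstance : Ring HK1) with
    mul_comm := by
      rintro ⟨_, a, b, rfl⟩ ⟨_, c, d, rfl⟩
      apply Subtype.ext
      show (⟨a,b,b,b⟩ : ℍ[ℤ]) * ⟨c,d,d,d⟩ = (⟨c,d,d,d⟩ : ℍ[ℤ]) * ⟨a,b,b,b⟩
      ext <;> simp <;> ring }

/-!
Writing ω = i + j + k, one has ω² = -3, so H(K₁) = ℤ[ω] is a copy of ℤ√-3. For z = a + b√d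
with a, b coprime and N = a² - d b² the norm of z, the integer b is invertible modulo N, and
r = -a b⁻¹ is a square root of d in ℤ/N with a + b r = 0. Thus √d ↦ r is a surjection
ℤ√d → ℤ/N killing z. Conversely, if w is in its kernel then N divides both coordinates of
w z̄; writing w z̄ = N q, we get N w = z z̄ w = N z q, and cancelling N ≠ 0 gives w = z q.
-/

theorem ZMod.intCast_zmod_natAbs_eq_zero_iff_dvd (a b : ℤ) : (a : ZMod b.natAbs) = 0 ↔ b ∣ a := by
  rw [ZMod.intCast_zmod_eq_zero_iff_dvd, Int.natAbs_dvd]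

namespace Zsqrtd

variable {d : ℤ}

theorem exists_mul_self_eq_and_re_add_im_mul_eq_zero {z : ℤ√d} (h : IsCoprime z.re z.im) :
    ∃ r : ZMod z.norm.natAbs, r * r = d ∧ z.re + z.im * r = 0 := by
  have hnorm : ((z.re * z.re - d * z.im * z.im : ℤ) : ZMod z.norm.natAbs) = 0 := by
    rw [← norm_def, ZMod.intCast_zmod_natAbs_eq_zero_iff_dvd]
  obtain ⟨u, v, huv⟩ := (h.symm.mul_right h.symm).add_mul_left_right (-d * z.im)
  have hu : (u * z.im : ZMod z.norm.natAbs) = 1 := by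
    have := congrArg (Int.cast : ℤ → ZMod z.norm.natAbs) huv
    push_cast at this hnorm
    linear_combination this - (v : ZMod z.norm.natAbs) * hnorm
  push_cast at hnorm
  refine ⟨-z.re * u, ?_, ?_⟩
  · linear_combination (u : ZMod z.norm.natAbs) ^ 2 * hnorm + (d * (u * z.im + 1)) * hu
  · linear_combination -(z.re : ZMod z.norm.natAbs) * hu

theorem ker_lift_eq_span {z : ℤ√d} (hz : z.norm ≠ 0) (r : {r : ZMod z.norm.natAbs // r * r = d})
    (hr : z.re + z.im * (r : ZMod z.norm.natAbs) = 0) : RingHom.ker (lift r) = Ideal.span {z} := by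
  apply _root_.le_antisymm
  · intro w hw
    rw [RingHom.mem_ker, lift_apply_apply] at hw
    obtain ⟨q, hq⟩ : (z.norm : ℤ√d) ∣ w * star z := by
      rw [intCast_dvd, re_mul, im_mul, re_star, im_star,
        ← ZMod.intCast_zmod_natAbs_eq_zero_iff_dvd, ← ZMod.intCast_zmod_natAbs_eq_zero_iff_dvd]
      push_cast
      constructor
      · linear_combination (z.re : ZMod z.norm.natAbs) * hw - (w.im * r) * hr + (z.im * w.im) * r.2
      · linear_combination -(z.im : ZMod z.norm.natAbs) * hw + (w.im : ZMod z.norm.natAbs) * hr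
    refine Ideal.mem_span_singleton'.2 ⟨q, Zsqrtd.eq_of_smul_eq_smul_left hz ?_⟩
    rw [norm_eq_mul_conj] at hq ⊢
    linear_combination (-z) * hq
  · rw [Ideal.span_le, Set.singleton_subset_iff, SetLike.mem_coe, RingHom.mem_ker,
      lift_apply_apply, hr]

noncomputable def quotientSpanEquivZMod {z : ℤ√d} (hz : z.norm ≠ 0) (h : IsCoprime z.re z.im) :
    ℤ√d ⧸ Ideal.span {z} ≃+* ZMod z.norm.natAbs :=
  have hr := (exists_mul_self_eq_and_re_add_im_mul_eq_zero h).choose_spec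
  (Ideal.quotEquivOfEq (ker_lift_eq_span hz ⟨_, hr.1⟩ hr.2).symm).trans
    (RingHom.quotientKerEquivOfSurjective (ZMod.ringHom_surjective _))

end Zsqrtd

def HK1.equivZsqrtd : HK1 ≃+* ℤ√(-3) where
  toFun x := ⟨x.1.re, x.1.imI⟩
  invFun z := ⟨⟨z.re, z.im, z.im, z.im⟩, z.re, z.im, rfl⟩
  left_inv := by rintro ⟨_, a, b, rfl⟩; rfl
  right_inv _ := rfl
  map_mul' := by
    rintro ⟨_, a, b, rfl⟩ ⟨_, c, d, rfl⟩
    -- the literals coming from `HK1`'s carrier are not syntactically in `ℍ[ℤ]`, so simp is stuck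
    change (⟨((⟨a, b, b, b⟩ : ℍ[ℤ]) * ⟨c, d, d, d⟩).re, ((⟨a, b, b, b⟩ : ℍ[ℤ]) * ⟨c, d, d, d⟩).imI⟩
      : ℤ√(-3)) = ⟨a, b⟩ * ⟨c, d⟩
    ext <;> simp; ring
  map_add' _ _ := rfl

theorem HK1_quot_iso (a b : ℤ) (h : IsCoprime a b) :
    Nonempty ((HK1 ⧸ Ideal.span {(⟨⟨a, b, b, b⟩, ⟨a, b, rfl⟩⟩ : HK1)}) ≃+*
      ZMod (a ^ 2 + 3 * b ^ 2).toNat) := by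
  set z : ℤ√(-3) := ⟨a, b⟩
  have hnorm : z.norm = a ^ 2 + 3 * b ^ 2 := by rw [Zsqrtd.norm_def]; ring
  have hz : z.norm ≠ 0 := by
    rw [Ne, Zsqrtd.norm_eq_zero_iff (by norm_num), Zsqrtd.ext_iff]
    rintro ⟨rfl, rfl⟩
    exact not_isCoprime_zero_zero h
  have hspan : Ideal.span {z} =
      (Ideal.span {(⟨⟨a, b, b, b⟩, ⟨a, b, rfl⟩⟩ : HK1)}).map HK1.equivZsqrtd := by
    rw [Ideal.map_span, Set.image_singleton]; rfl
  have hn : z.norm.natAbs = (a ^ 2 + 3 * b ^ 2).toNat := by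
    have : 0 ≤ a ^ 2 + 3 * b ^ 2 := by positivity
    omega
  exact ⟨((Ideal.quotientEquiv _ _ HK1.equivZsqrtd hspan).trans
    (Zsqrtd.quotientSpanEquivZMod hz h)).trans (ZMod.ringEquivCongr hn)⟩
end
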